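/- arXiv:1707.00583 — 2 statements merged into one kernel-verified Lean document; each statement's English description precedes it below -/
import Mathlib

section
/- Every closed convex cone in ℝ² is finitely generated (polyhedral). -/
/-- The convex cone spanned by a subset `S` of a real vector space. -/
def coneHull {E : Type*} [AddCommMonoid E] [Module ℝ E] (S : Set E) : Set E :=
  {x | ∃ (k : ℕ) (a : Fin k → ℝ) (v : Fin k → E),
    (∀ i, 0 ≤ a i) ∧ (∀ i, v i ∈ S) ∧ x = ∑ i, a i • v i}

/-!
A closed convex cone `K` meets a segment `[u, v]` in a closed convex subset of it, hence in a
subsegment `[a, b]`; so the part of `K` inside the cone spanned by `u` and `v` is spanned by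
`a` and `b`. The plane is the union of its four coordinate quadrants, each spanned by two
vectors, so `K` is spanned by at most eight vectors.
-/

open Set PointedCone

theorem coneHull_eq_hull {E : Type*} [AddCommMonoid E] [Module ℝ E] (S : Set E) :
    coneHull S = (hull ℝ S : Set E) := by
  ext x
  simp only [coneHull, mem_ofPred_eq, SetLike.mem_coe, Submodule.mem_span_set']
  constructor
  · rintro ⟨k, a, v, ha, hv, rfl⟩
    exact ⟨k, fun i => ⟨a i, ha i⟩, fun i => ⟨v i, hv i⟩, rfl⟩
  · rintro ⟨k, a, v, rfl⟩
    exact ⟨k, fun i => a i, fun i => v i, fun i => (a i).2, fun i => (v i).2, rfl⟩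

theorem PointedCone.convexHull_subset_hull {R E : Type*} [Semiring R] [PartialOrder R]
    [IsOrderedRing R] [AddCommMonoid E] [Module R E] (s : Set E) :
    convexHull R s ⊆ hull R s :=
  convexHull_min subset_hull (PointedCone.convex _)

section TopologicalVectorSpace

variable {E : Type*} [AddCommGroup E] [Module ℝ E] [TopologicalSpace E] [IsTopologicalAddGroup E]
  [ContinuousSMul ℝ E]

theorem IsClosed.exists_finset_convexHull_eq_inter_segment {C : Set E} (hC : IsClosed C)
    (hconv : Convex ℝ C) (u v : E) :
    ∃ F : Finset E, convexHull ℝ (F : Set E) = C ∩ segment ℝ u v := by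
  classical
  set f : ℝ →ᵃ[ℝ] E := AffineMap.lineMap u v
  set T := Icc (0 : ℝ) 1 ∩ f ⁻¹' C
  have hfT : f '' T = C ∩ segment ℝ u v := by
    rw [segment_eq_image_lineMap, image_inter_preimage, inter_comm]
  rcases T.eq_empty_or_nonempty with hT | hT
  · exact ⟨∅, by simp [← hfT, hT]⟩
  have hTcpt : IsCompact T := isCompact_Icc.inter_right (hC.preimage AffineMap.lineMap_continuous)
  have hTconv : Convex ℝ T := (convex_Icc 0 1).inter (hconv.affine_preimage f)
  refine ⟨{f (sInf T), f (sSup T)}, ?_⟩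
  rw [Finset.coe_pair, convexHull_pair, ← image_segment,
    segment_eq_Icc (csInf_le_csSup hT hTcpt.bddBelow hTcpt.bddAbove),
    ← eq_Icc_of_connected_compact (hTconv.isConnected hT) hTcpt, hfT]

namespace PointedCone

theorem fg_inf_hull_pair (K : PointedCone ℝ E) (hK : IsClosed (K : Set E)) (u v : E) :
    (K ⊓ hull ℝ {u, v}).FG := by
  obtain ⟨F, hF⟩ := hK.exists_finset_convexHull_eq_inter_segment K.convex u v
  have hseg : segment ℝ u v ⊆ hull ℝ {u, v} :=
    (convexHull_pair u v).symm.subset.trans (convexHull_subset_hull _)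
  refine ⟨F, le_antisymm ?_ fun x ⟨hxK, hxuv⟩ => ?_⟩
  · refine Submodule.span_le.mpr fun y hy => ?_
    obtain ⟨hyK, hyuv⟩ : y ∈ (K : Set E) ∩ segment ℝ u v := hF ▸ subset_convexHull ℝ _ hy
    exact ⟨hyK, hseg hyuv⟩
  obtain ⟨⟨a, ha⟩, ⟨b, hb⟩, hx⟩ := Submodule.mem_span_pair.mp hxuv
  replace hx : x = a • u + b • v := by simp only [← hx, Nonneg.mk_smul]
  rcases (add_nonneg ha hb).eq_or_lt with hab | hab
  · obtain ⟨rfl, rfl⟩ : a = 0 ∧ b = 0 := ⟨by linarith, by linarith⟩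
    simp [hx]
  set y := (a + b)⁻¹ • x
  have hyK : y ∈ K := PointedCone.smul_mem K (inv_nonneg.mpr hab.le) hxK
  have hyuv : y ∈ segment ℝ u v :=
    ⟨a / (a + b), b / (a + b), by positivity, by positivity, by field_simp, by
      simp only [y, hx, smul_add, smul_smul, div_eq_inv_mul]⟩
  have hyF : y ∈ hull ℝ (F : Set E) := convexHull_subset_hull _ (hF ▸ ⟨hyK, hyuv⟩)
  have hxy : x = (a + b) • y := by simp only [y, smul_smul, mul_inv_cancel₀ hab.ne', one_smul]
  exact hxy ▸ PointedCone.smul_mem _ hab.le hyF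

theorem fg_of_isClosed_of_forall_mem_hull_pair {ι : Type*} [Finite ι] (u v : ι → E)
    (huv : ∀ x, ∃ i, x ∈ hull ℝ {u i, v i}) (K : PointedCone ℝ E) (hK : IsClosed (K : Set E)) :
    K.FG := by
  have hK_eq : K = ⨆ i, K ⊓ hull ℝ {u i, v i} := by
    refine le_antisymm (fun x hx => ?_) (iSup_le fun _ => inf_le_left)
    obtain ⟨i, hi⟩ := huv x
    exact Submodule.mem_iSup_of_mem i (Submodule.mem_inf.mpr ⟨hx, hi⟩)
  exact hK_eq ▸ Submodule.fg_iSup _ fun i => K.fg_inf_hull_pair hK (u i) (v i)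

end PointedCone

end TopologicalVectorSpace

theorem mem_hull_pi_single_sign (x : Fin 2 → ℝ) :
    x ∈ hull ℝ
      {Pi.single 0 (SignType.sign (x 0) : ℝ), Pi.single 1 (SignType.sign (x 1) : ℝ)} := by
  refine Submodule.mem_span_pair.mpr ⟨⟨|x 0|, abs_nonneg _⟩, ⟨|x 1|, abs_nonneg _⟩, ?_⟩
  ext i
  fin_cases i <;> simp

theorem PointedCone.fg_of_isClosed_fin_two (K : PointedCone ℝ (Fin 2 → ℝ))
    (hK : IsClosed (K : Set (Fin 2 → ℝ))) : K.FG := by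
  refine fg_of_isClosed_of_forall_mem_hull_pair (ι := SignType × SignType)
    (fun s => Pi.single 0 (s.1 : ℝ)) (fun s => Pi.single 1 (s.2 : ℝ)) (fun x => ?_) K hK
  exact ⟨(SignType.sign (x 0), SignType.sign (x 1)), mem_hull_pi_single_sign x⟩

/-- Every (nonempty) closed convex cone in `ℝ²` is finitely generated. -/
theorem closed_cone_plane_fg (C : Set (Fin 2 → ℝ))
    (hcone : ∀ u ∈ C, ∀ v ∈ C, ∀ a b : ℝ, 0 ≤ a → 0 ≤ b → a • u + b • v ∈ C)
    (hne : C.Nonempty) (hclosed : IsClosed C) :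
    ∃ G : Finset (Fin 2 → ℝ), C = coneHull (G : Set (Fin 2 → ℝ)) := by
  let K : PointedCone ℝ (Fin 2 → ℝ) :=
    .ofConeComb C hne fun u hu v hv a ha b hb => hcone u hu v hv a b ha hb
  obtain ⟨G, hG⟩ := K.fg_of_isClosed_fin_two hclosed
  exact ⟨G, by rw [coneHull_eq_hull]; exact (congrArg SetLike.coe hG).symm⟩
end

section
/- Let F₋₁ = 1, F₀ = 0, F_{i+1} = F_i + F_{i−1} be the Fibonacci numbers and φ = (1+√5)/2. For odd i ≥ 1, the intervals [F_i²/F_{i−2}², F_{i+2}/F_{i−2}] and [F_{i+2}/F_{i−2}, F_{i+2}²/F_i²] are nonempty and their union over odd i ≥ 1 covers [1, φ⁴); moreover F_{i+2}/F_{i−2} → φ⁴ and at the endpoints t = F_i²/F_{i−2}² one has (F_{i−2}/F_i)·t = √t. -/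
/-- Shifted Fibonacci numbers: `fibm n = F_{n-1}` with the convention
`F_{-1} = 1`, `F_0 = 0`. -/
noncomputable def fibm : ℕ → ℝ
  | 0 => 1
  | 1 => 0
  | n + 2 => fibm (n + 1) + fibm n

/-!
For odd `i`, Catalan's identity `F_{i-2} F_{i+2} = F_i² + 1` gives `F_i² ≤ F_{i-2} F_{i+2}`, which is
exactly the nonemptiness of both intervals. The left endpoints `F_i²/F_{i-2}²` start at `1` and tend
to `φ⁴` because ratios `F_{n+k}/F_n` tend to `φ^k`; so every `t ∈ [1, φ⁴)` lies between two
consecutive ones, and consecutive left endpoints are the outer endpoints of the two intervals.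
-/

open Filter Topology Real
open scoped goldenRatio

theorem exists_le_and_lt_succ_of_le_of_exists_lt {α : Type*} [LinearOrder α] {s : ℕ → α} {t : α}
    (h₀ : s 0 ≤ t) (h : ∃ n, t < s n) : ∃ j, s j ≤ t ∧ t < s (j + 1) := by
  by_contra! H
  obtain ⟨n, hn⟩ := h
  exact (Nat.rec h₀ H n : s n ≤ t).not_gt hn

section Ordered

variable {K : Type*} [Field K] [LinearOrder K] [IsStrictOrderedRing K] {a b c : K}

theorem sq_div_sq_le_div_of_sq_le_mul (ha : 0 < a) (h : b ^ 2 ≤ a * c) :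
    b ^ 2 / a ^ 2 ≤ c / a := by
  rw [div_le_div_iff₀ (by positivity) ha]
  nlinarith

theorem div_le_sq_div_sq_of_sq_le_mul (ha : 0 < a) (hb : 0 < b) (h : b ^ 2 ≤ a * c) :
    c / a ≤ c ^ 2 / b ^ 2 := by
  have hc : 0 < c := pos_of_mul_pos_right (lt_of_lt_of_le (by positivity) h) ha.le
  rw [div_le_div_iff₀ ha (by positivity)]
  nlinarith

end Ordered

theorem tendsto_fib_add_div_fib (k : ℕ) :
    Tendsto (fun n ↦ (Nat.fib (n + k) / Nat.fib n : ℝ)) atTop (𝓝 (φ ^ k)) := by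
  induction k with
  | zero =>
    refine tendsto_const_nhds.congr' ?_
    filter_upwards [eventually_ne_atTop 0] with n hn
    simp [(Nat.fib_pos.2 (Nat.pos_of_ne_zero hn)).ne']
  | succ k ih =>
    rw [pow_succ']
    refine ((tendsto_fib_succ_div_fib_atTop.comp (tendsto_add_atTop_nat k)).mul ih).congr' ?_
    filter_upwards [eventually_ne_atTop 0] with n hn
    have : (Nat.fib (n + k) : ℝ) ≠ 0 := by
      exact_mod_cast (Nat.fib_pos.2 (by omega)).ne'
    simp [← add_assoc, div_mul_div_cancel₀ this]

theorem fibm_eq_intFib : ∀ n : ℕ, fibm n = Int.fib (n - 1)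
  | 0 => by simp [fibm]
  | 1 => by simp [fibm]
  | n + 2 => by
    rw [fibm, fibm_eq_intFib (n + 1), fibm_eq_intFib n, show ((n + 2 : ℕ) : ℤ) - 1 = (n - 1) + 2 by
      push_cast; ring, Int.fib_add_two]
    push_cast; ring_nf

theorem fibm_succ (n : ℕ) : fibm (n + 1) = Nat.fib n := by
  simp [fibm_eq_intFib]

theorem fibm_pos {n : ℕ} (hn : n ≠ 1) : 0 < fibm n := by
  rcases n with _ | n
  · simp [fibm]
  · rw [fibm_succ]
    exact_mod_cast Nat.fib_pos.2 (by omega)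

theorem fibm_mul_fibm_add_four (n : ℕ) :
    fibm n * fibm (n + 4) = fibm (n + 2) ^ 2 + (-1) ^ n := by
  have h := Int.fib_add_sq_sub_fib_mul_fib_add_two_mul ((n : ℤ) - 1) 2
  have hsign : ((-1) ^ ((n : ℤ) - 1).natAbs : ℤ) = -(-1) ^ n := by
    rcases n with _ | n
    · simp
    · simp [pow_succ]
  rw [hsign, Int.fib_two, show (n : ℤ) - 1 + 2 = ((n + 2 : ℕ) : ℤ) - 1 by push_cast; ring,
    show (n : ℤ) - 1 + 2 * 2 = ((n + 4 : ℕ) : ℤ) - 1 by push_cast; ring] at h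
  have h' : Int.fib ((n : ℤ) - 1) * Int.fib (((n + 4 : ℕ) : ℤ) - 1) =
      Int.fib (((n + 2 : ℕ) : ℤ) - 1) ^ 2 + (-1) ^ n := by
    linear_combination -h
  simp only [fibm_eq_intFib]
  exact_mod_cast h'

theorem tendsto_fibm_two_mul_add_div (k : ℕ) :
    Tendsto (fun j ↦ fibm (2 * j + k) / fibm (2 * j)) atTop (𝓝 (φ ^ k)) := by
  rw [← tendsto_add_atTop_iff_nat 1]
  have h : Tendsto (fun j ↦ 2 * j + 1) atTop atTop :=
    tendsto_atTop_mono (fun j ↦ show j ≤ 2 * j + 1 by omega) tendsto_id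
  refine ((tendsto_fib_add_div_fib k).comp h).congr fun j ↦ ?_
  rw [Function.comp_apply, show 2 * (j + 1) + k = 2 * j + 1 + k + 1 by ring, mul_add, mul_one,
    fibm_succ, fibm_succ]

/-- For odd `i ≥ 1`, the intervals `[F_i²/F_{i-2}², F_{i+2}/F_{i-2}]` and
`[F_{i+2}/F_{i-2}, F_{i+2}²/F_i²]` are nonempty, their union covers `[1, φ⁴)`,
`F_{i+2}/F_{i-2} → φ⁴`, and at the endpoint `t = F_i²/F_{i-2}²` one has
`(F_{i-2}/F_i)·t = √t`. (Here `F_i = fibm (i+1)`.) -/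
theorem fibonacci_intervals :
    (∀ i : ℕ, Odd i → 1 ≤ i →
      fibm (i+1)^2 / fibm (i-1)^2 ≤ fibm (i+3) / fibm (i-1) ∧
      fibm (i+3) / fibm (i-1) ≤ fibm (i+3)^2 / fibm (i+1)^2) ∧
    (∀ t : ℝ, 1 ≤ t → t < ((1 + Real.sqrt 5) / 2)^4 →
      ∃ i : ℕ, Odd i ∧ 1 ≤ i ∧
        fibm (i+1)^2 / fibm (i-1)^2 ≤ t ∧ t ≤ fibm (i+3)^2 / fibm (i+1)^2) ∧
    Filter.Tendsto (fun j : ℕ => fibm (2*j+4) / fibm (2*j)) Filter.atTop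
      (nhds (((1 + Real.sqrt 5) / 2)^4)) ∧
    (∀ i : ℕ, Odd i → 1 ≤ i →
      (fibm (i-1) / fibm (i+1)) * (fibm (i+1)^2 / fibm (i-1)^2)
        = Real.sqrt (fibm (i+1)^2 / fibm (i-1)^2)) := by
  have hpos : ∀ j, 0 < fibm (2 * j) := fun j ↦ fibm_pos (by omega)
  refine ⟨?_, fun t ht₁ ht₂ ↦ ?_, tendsto_fibm_two_mul_add_div 4, ?_⟩
  · rintro _ ⟨j, rfl⟩ -
    have hcatalan : fibm (2 * j + 2) ^ 2 ≤ fibm (2 * j) * fibm (2 * j + 4) := by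
      linarith [fibm_mul_fibm_add_four (2 * j), (even_two_mul j).neg_one_pow (α := ℝ)]
    exact ⟨sq_div_sq_le_div_of_sq_le_mul (hpos j) hcatalan,
      div_le_sq_div_sq_of_sq_le_mul (hpos j) (hpos (j + 1)) hcatalan⟩
  · have hlim : Tendsto (fun j ↦ fibm (2 * j + 2) ^ 2 / fibm (2 * j) ^ 2) atTop (𝓝 (φ ^ 4)) := by
      simpa only [div_pow, ← pow_mul] using (tendsto_fibm_two_mul_add_div 2).pow 2
    obtain ⟨j, hj₁, hj₂⟩ := exists_le_and_lt_succ_of_le_of_exists_lt (by simpa [fibm] using ht₁)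
      (hlim.eventually (eventually_gt_nhds ht₂)).exists
    exact ⟨2 * j + 1, odd_two_mul_add_one j, by omega, hj₁, by simpa [mul_add] using hj₂.le⟩
  · rintro _ ⟨j, rfl⟩ -
    simp only [add_tsub_cancel_right]
    rw [← div_pow, Real.sqrt_sq (by positivity [hpos j, hpos (j + 1)])]
    field_simp
end
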